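/- For all real θ, φ, β₁, β₂, the identity G(θ, φ) · diag(e^{iβ₁}, e^{iβ₂}) = diag(e^{iβ'}, e^{iβ'}) · R_y(θ) · R_z(φ') holds, where β' = (φ + β₁ + β₂)/2 and φ' = (β₂ - β₁ - φ)/2. -/
import Mathlib
open Matrix
noncomputable def Givens (θ φ : ℝ) : Matrix (Fin 2) (Fin 2) ℂ :=
  !![Complex.exp (φ * Complex.I) * Real.cos θ, -(Real.sin θ : ℂ);
     Complex.exp (φ * Complex.I) * Real.sin θ, (Real.cos θ : ℂ)]
noncomputable def Ry (θ : ℝ) : Matrix (Fin 2) (Fin 2) ℂ :=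
  !![(Real.cos θ : ℂ), -(Real.sin θ : ℂ);
     (Real.sin θ : ℂ), (Real.cos θ : ℂ)]
noncomputable def Rz (φ : ℝ) : Matrix (Fin 2) (Fin 2) ℂ :=
  Matrix.diagonal ![Complex.exp (-(φ : ℂ) * Complex.I), Complex.exp ((φ : ℂ) * Complex.I)]
lemma exp_helper1 (c a b d e : ℂ) (h : a + b = d + e) :
    Complex.exp a * c * Complex.exp b = Complex.exp d * c * Complex.exp e :=
  calc Complex.exp a * c * Complex.exp b = c * Complex.exp (a + b) := by
        rw [Complex.exp_add]; ring
    _ = c * Complex.exp (d + e) := by rw [h]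
    _ = Complex.exp d * c * Complex.exp e := by rw [Complex.exp_add]; ring

lemma exp_helper2 (c b d e : ℂ) (h : b = d + e) :
    c * Complex.exp b = Complex.exp d * c * Complex.exp e := by
  rw [h, Complex.exp_add]; ring

theorem stmt_3 (θ φ β₁ β₂ : ℝ) :
    Givens θ φ * Matrix.diagonal ![Complex.exp (β₁ * Complex.I), Complex.exp (β₂ * Complex.I)]
      = Matrix.diagonal ![Complex.exp (((φ + β₁ + β₂) / 2 : ℝ) * Complex.I),
                          Complex.exp (((φ + β₁ + β₂) / 2 : ℝ) * Complex.I)]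
        * Ry θ * Rz ((β₂ - β₁ - φ) / 2) := by
  ext i j
  fin_cases i <;> fin_cases j <;>
    simp [Givens, Ry, Rz, Matrix.mul_apply, Fin.sum_univ_two, Matrix.diagonal] <;>
    first
      | (apply exp_helper1; ring)
      | (apply exp_helper2; ring)
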